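/- Let d ≥ 1, let H be a d×d real symmetric matrix with 0 ⪯ H ⪯ βI for some β > 0, let δ ∈ (0, 1/2], let η ∈ (0, 1/(8β)], and let v ∈ [0, δ]. Then for every λ ∈ ℂ with λ ≠ 0 such that λ + δ − 1 is an eigenvalue of the d×d complex matrix −vI − (η(λ−1)/λ²)H + (v/λ)I, it holds that |λ| < 1 − δ/4. -/

import Mathlib

/-!
By the Rayleigh quotient of an eigenvector, `λ + δ - 1 = v/λ - v - a (λ - 1)/λ²` with
`a = η h` for some `h ∈ [0, β]`, so `0 ≤ a ≤ 1/8`. With `z = λ⁻¹` and `q(z) = 1 + v z + a z²`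
this reads `q(z) = z (q(z) - δ)`. If `‖λ‖ ≥ 1 - δ/4` then `‖z‖ ≤ 8/7`, and on that disc
`‖q(z) - δ‖ < (1 - δ/4) ‖q(z)‖`, which forces `‖q(z)‖ < ‖q(z)‖`.
-/

open Matrix ComplexOrder

theorem Matrix.PosSemidef.map_ofReal {n : Type*} [Fintype n] {M : Matrix n n ℝ}
    (hM : M.PosSemidef) : (M.map ((↑) : ℝ → ℂ)).PosSemidef := by
  obtain ⟨m, v, rfl⟩ := posSemidef_iff_eq_sum_vecMulVec.mp hM
  have hmap : ((∑ i, vecMulVec (v i) (star (v i))).map ((↑) : ℝ → ℂ))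
      = ∑ i, vecMulVec ((↑) ∘ v i) (star ((↑) ∘ v i)) := by
    ext j k
    simp [Matrix.sum_apply, vecMulVec_apply]
  rw [hmap]
  exact posSemidef_sum _ fun i _ => posSemidef_vecMulVec_self_star _

section Rayleigh

variable {n 𝕜 : Type*} [Fintype n] [DecidableEq n] [RCLike 𝕜]

theorem Matrix.exists_mulVec_eq_smul_of_mem_spectrum {M : Matrix n n 𝕜} {μ : 𝕜}
    (hμ : μ ∈ spectrum 𝕜 M) : ∃ w ≠ 0, M *ᵥ w = μ • w := by
  rw [spectrum.mem_iff, isUnit_iff_isUnit_det, isUnit_iff_ne_zero, not_not,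
    ← exists_mulVec_eq_zero_iff] at hμ
  obtain ⟨w, hw₀, hw⟩ := hμ
  rw [Algebra.algebraMap_eq_smul_one, sub_mulVec, smul_mulVec, one_mulVec, sub_eq_zero] at hw
  exact ⟨w, hw₀, hw.symm⟩

theorem Matrix.exists_eq_add_mul_of_mem_spectrum_smul_one_add_smul {A : Matrix n n 𝕜} {β : ℝ}
    (hA : A.PosSemidef) (hAβ : ((β : 𝕜) • 1 - A).PosSemidef) {α c μ : 𝕜}
    (hμ : μ ∈ spectrum 𝕜 (α • 1 + c • A)) : ∃ h ∈ Set.Icc 0 β, μ = α + c * h := by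
  obtain ⟨w, hw₀, hw⟩ := exists_mulVec_eq_smul_of_mem_spectrum hμ
  have hrayleigh : c * (star w ⬝ᵥ A *ᵥ w) = (μ - α) * (star w ⬝ᵥ w) := by
    rw [add_mulVec, smul_mulVec, smul_mulVec, one_mulVec] at hw
    have hdot := congrArg (star w ⬝ᵥ ·) hw
    simp only [dotProduct_add, dotProduct_smul, smul_eq_mul] at hdot
    linear_combination hdot
  obtain ⟨q, hq, hq_eq⟩ := RCLike.nonneg_iff_exists_ofReal.mp (hA.dotProduct_mulVec_nonneg w)
  obtain ⟨N, hN, hN_eq⟩ := RCLike.pos_iff_exists_ofReal.mp (dotProduct_star_self_pos_iff.mpr hw₀)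
  have hqβ : q ≤ β * N := by
    have hβ := hAβ.dotProduct_mulVec_nonneg w
    rw [sub_mulVec, smul_mulVec, one_mulVec, dotProduct_sub, dotProduct_smul, ← hq_eq, ← hN_eq,
      smul_eq_mul, ← RCLike.ofReal_mul, ← RCLike.ofReal_sub, RCLike.ofReal_nonneg] at hβ
    linarith
  refine ⟨q / N, ⟨by positivity, (div_le_iff₀ hN).mpr hqβ⟩, ?_⟩
  rw [← hq_eq, ← hN_eq] at hrayleigh
  have hN₀ : (N : 𝕜) ≠ 0 := RCLike.ofReal_ne_zero.mpr hN.ne'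
  rw [RCLike.ofReal_div]
  field_simp
  linear_combination -hrayleigh

end Rayleigh

section Momentum

variable {δ v a : ℝ}

def momentumPoly (v a : ℝ) (z : ℂ) : ℂ := 1 + v * z + a * z ^ 2

theorem sq_norm_momentum_lt_re (hδ₀ : 0 < δ) (hδ₁ : δ ≤ 1 / 2) (hv₀ : 0 ≤ v) (hvδ : v ≤ δ)
    (ha₀ : 0 ≤ a) (ha₁ : a ≤ 1 / 8) {z : ℂ} (hz : ‖z‖ ≤ 8 / 7) :
    (1 / 2 - δ / 16) * ‖v * z + a * z ^ 2‖ ^ 2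
      < 3 / 2 - 15 * δ / 16 + (1 + δ / 8) * (v * z + a * z ^ 2).re := by
  set p := v * z + a * z ^ 2
  set r := ‖z‖
  have hr : 0 ≤ r := norm_nonneg z
  have hvr : v * r ≤ 8 * δ / 7 := by nlinarith [mul_le_mul hvδ hz hr hδ₀.le]
  have har : a * r ^ 2 ≤ 8 / 49 := by
    nlinarith [mul_le_mul ha₁ (pow_le_pow_left₀ hr hz 2) (sq_nonneg r) (by norm_num)]
  have hp_re : p.re = v * z.re + a * (z ^ 2).re := by
    simp only [p, Complex.add_re, Complex.re_ofReal_mul]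
  have hz_sq_re : -(r ^ 2) ≤ (z ^ 2).re := by
    have h := neg_le_of_abs_le (Complex.abs_re_le_norm (z ^ 2))
    rwa [norm_pow] at h
  have hp_norm : ‖p‖ ≤ v * r + a * r ^ 2 := by
    calc ‖p‖ ≤ ‖(v : ℂ) * z‖ + ‖(a : ℂ) * z ^ 2‖ := norm_add_le _ _
      _ = v * r + a * r ^ 2 := by
        rw [norm_mul, norm_mul, norm_pow, Complex.norm_of_nonneg hv₀, Complex.norm_of_nonneg ha₀]
  rcases le_or_gt 0 z.re with hx | hx
  · -- `v z` does not decrease the real part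
    have hre : -(a * r ^ 2) ≤ p.re := by
      rw [hp_re]; nlinarith [mul_nonneg hv₀ hx, mul_le_mul_of_nonneg_left hz_sq_re ha₀]
    nlinarith [norm_nonneg p, mul_le_mul hp_norm hp_norm (norm_nonneg p) (by positivity)]
  · -- the cross term `2 v a Re z` of `‖v + a z‖²` is negative
    have hre : -(v * r + a * r ^ 2) ≤ p.re :=
      (neg_le_neg hp_norm).trans (neg_le_of_abs_le (Complex.abs_re_le_norm p))
    have hp_sq : ‖p‖ ^ 2 ≤ r ^ 2 * (v ^ 2 + a ^ 2 * r ^ 2) := by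
      have hfac : p = z * (v + a * z) := by ring
      have hr_sq : r ^ 2 = z.re ^ 2 + z.im ^ 2 := by
        rw [Complex.sq_norm, Complex.normSq_apply]; ring
      rw [hfac, norm_mul, mul_pow]
      gcongr
      rw [Complex.sq_norm, Complex.normSq_apply]
      simp only [Complex.add_re, Complex.add_im, Complex.ofReal_re, Complex.ofReal_im,
        Complex.re_ofReal_mul, Complex.im_ofReal_mul]
      nlinarith [mul_nonneg hv₀ ha₀]
    have hp_sq' : ‖p‖ ^ 2 ≤ (8 * δ / 7) ^ 2 + (8 / 49) ^ 2 := by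
      nlinarith [mul_le_mul hvr hvr (by positivity) (by positivity),
        mul_le_mul har har (by positivity) (by positivity)]
    nlinarith [mul_le_mul_of_nonneg_left hp_sq' (by linarith : (0 : ℝ) ≤ 1 / 2 - δ / 16),
      mul_le_mul_of_nonneg_left hre (by linarith : (0 : ℝ) ≤ 1 + δ / 8)]

theorem norm_momentumPoly_sub_lt (hδ₀ : 0 < δ) (hδ₁ : δ ≤ 1 / 2) (hv₀ : 0 ≤ v) (hvδ : v ≤ δ)
    (ha₀ : 0 ≤ a) (ha₁ : a ≤ 1 / 8) {z : ℂ} (hz : ‖z‖ ≤ 8 / 7) :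
    ‖momentumPoly v a z - δ‖ < (1 - δ / 4) * ‖momentumPoly v a z‖ := by
  have hbound := sq_norm_momentum_lt_re hδ₀ hδ₁ hv₀ hvδ ha₀ ha₁ hz
  set p := v * z + a * z ^ 2
  have hq : momentumPoly v a z = 1 + p := by simp only [momentumPoly, p]; ring
  rw [hq]
  refine lt_of_pow_lt_pow_left₀ 2 (by nlinarith [norm_nonneg (1 + p)]) ?_
  rw [mul_pow, Complex.sq_norm, Complex.sq_norm]
  rw [Complex.sq_norm] at hbound
  simp only [Complex.normSq_apply, Complex.add_re, Complex.add_im, Complex.sub_re,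
    Complex.sub_im, Complex.one_re, Complex.one_im, Complex.ofReal_re,
    Complex.ofReal_im] at hbound ⊢
  -- the difference of the two squares is `δ` times the gap in `hbound`
  nlinarith [mul_pos hδ₀ (sub_pos.2 hbound)]

theorem norm_lt_of_momentum_char_eq (hδ₀ : 0 < δ) (hδ₁ : δ ≤ 1 / 2) (hv₀ : 0 ≤ v) (hvδ : v ≤ δ)
    (ha₀ : 0 ≤ a) (ha₁ : a ≤ 1 / 8) {lam : ℂ} (hlam₀ : lam ≠ 0)
    (hlam : lam + δ - 1 = v / lam - v - a * (lam - 1) / lam ^ 2) : ‖lam‖ < 1 - δ / 4 := by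
  by_contra! hge
  set z := lam⁻¹
  have hz₀ : 0 < ‖z‖ := norm_pos_iff.mpr (inv_ne_zero hlam₀)
  have hz : ‖z‖ * (1 - δ / 4) ≤ 1 := by
    rw [norm_inv]
    exact inv_mul_le_one_of_le₀ hge (norm_nonneg lam)
  have hfix : momentumPoly v a z = z * (momentumPoly v a z - δ) := by
    simp only [momentumPoly, z]
    field_simp
    field_simp at hlam
    linear_combination hlam
  have hlt := norm_momentumPoly_sub_lt hδ₀ hδ₁ hv₀ hvδ ha₀ ha₁ (z := z) (by nlinarith)
  refine lt_irrefl ‖momentumPoly v a z‖ ?_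
  calc ‖momentumPoly v a z‖ = ‖z‖ * ‖momentumPoly v a z - δ‖ := by rw [← norm_mul, ← hfix]
    _ < ‖z‖ * ((1 - δ / 4) * ‖momentumPoly v a z‖) := mul_lt_mul_of_pos_left hlt hz₀
    _ ≤ ‖momentumPoly v a z‖ := by
      rw [← mul_assoc]; exact mul_le_of_le_one_left (norm_nonneg _) hz

end Momentum

theorem stmt7_general (d : ℕ) (H : Matrix (Fin d) (Fin d) ℝ) (β : ℝ)
    (hH : H.PosSemidef) (hHβ : (β • (1 : Matrix (Fin d) (Fin d) ℝ) - H).PosSemidef)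
    (δ η : ℝ) (hδ : δ ∈ Set.Ioc (0 : ℝ) (1 / 2)) (hη : η ∈ Set.Ioc (0 : ℝ) (1 / (8 * β)))
    (v : ℝ) (hv : v ∈ Set.Icc (0 : ℝ) δ)
    (lam : ℂ) (hlam0 : lam ≠ 0)
    (hlam : lam + (δ : ℂ) - 1 ∈ spectrum ℂ
      ((-(v : ℂ)) • (1 : Matrix (Fin d) (Fin d) ℂ)
        - ((η : ℂ) * (lam - 1) / lam ^ 2) • H.map (Complex.ofReal ·)
        + ((v : ℂ) / lam) • (1 : Matrix (Fin d) (Fin d) ℂ))) :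
    ‖lam‖ < 1 - δ / 4 := by
  obtain ⟨hη₀, hη₁⟩ := hη
  have hHβ' : ((β : ℂ) • 1 - H.map (Complex.ofReal ·)).PosSemidef := by
    simpa [Matrix.map_sub, Matrix.map_smul, Matrix.map_one] using hHβ.map_ofReal
  have hlam' : lam + δ - 1 ∈ spectrum ℂ ((v / lam - v : ℂ) • 1
      + (-(η * (lam - 1) / lam ^ 2) : ℂ) • H.map (Complex.ofReal ·)) := by
    convert hlam using 2; module
  obtain ⟨h, ⟨hh₀, hhβ⟩, hrel⟩ :=
    exists_eq_add_mul_of_mem_spectrum_smul_one_add_smul hH.map_ofReal hHβ' hlam'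
  have hηβ : η * (8 * β) ≤ 1 := (le_div_iff₀ (one_div_pos.mp (hη₀.trans_le hη₁))).mp hη₁
  refine norm_lt_of_momentum_char_eq (a := η * h) hδ.1 hδ.2 hv.1 hv.2 (by positivity)
    (by nlinarith [mul_le_mul_of_nonneg_left hhβ hη₀.le]) hlam0 ?_
  -- `h` arrives through the `RCLike` coercion
  rw [RCLike.ofReal_eq_complex_ofReal] at hrel
  rw [hrel]
  push_cast
  ring

/-- Momentum lemma (Section 3.1.2): if `0 ⪯ H ⪯ βI`, `δ ∈ (0, 1/2]`, `0 < η ≤ 1/(8β)` and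
`v ∈ [0, δ]`, then any nonzero `λ ∈ ℂ` such that `λ + δ − 1` is an eigenvalue of
`−vI − (η(λ−1)/λ²)H + (v/λ)I` satisfies `|λ| < 1 − δ/4`. -/
theorem stmt7 (d : ℕ) (hd : 1 ≤ d) (H : Matrix (Fin d) (Fin d) ℝ) (β : ℝ) (hβ : 0 < β)
    (hH : H.PosSemidef) (hHβ : (β • (1 : Matrix (Fin d) (Fin d) ℝ) - H).PosSemidef)
    (δ η : ℝ) (hδ : δ ∈ Set.Ioc (0 : ℝ) (1 / 2)) (hη : η ∈ Set.Ioc (0 : ℝ) (1 / (8 * β)))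
    (v : ℝ) (hv : v ∈ Set.Icc (0 : ℝ) δ)
    (lam : ℂ) (hlam0 : lam ≠ 0)
    (hlam : lam + (δ : ℂ) - 1 ∈ spectrum ℂ
      ((-(v : ℂ)) • (1 : Matrix (Fin d) (Fin d) ℂ)
        - ((η : ℂ) * (lam - 1) / lam ^ 2) • H.map (Complex.ofReal ·)
        + ((v : ℂ) / lam) • (1 : Matrix (Fin d) (Fin d) ℂ))) :
    ‖lam‖ < 1 - δ / 4 :=
  stmt7_general d H β hH hHβ δ η hδ hη v hv lam hlam0 hlam
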